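/- Let E be a finite-dimensional real inner product space, let H : E → ℝ be convex, let G′, δ, w_{t−1} ∈ E, set g = G′ + δ, and let η > 0. Let w_t = prox_{ηH}(w_{t−1} − ηg), i.e., the unique minimizer of u ↦ H(u) + (1/(2η))‖u − (w_{t−1} − ηg)‖². Then for every w ∈ E: ⟪G′, w_t − w⟫ ≤ H(w) − H(w_t) + (1/(2η))(‖w_{t−1} − w‖² − ‖w_t − w‖² − ‖w_t − w_{t−1}‖²) + (1/2)‖δ‖² + (1/2)‖w_t − w‖². -/

import Mathlib

/-!
Comparing the prox objective at `wt` with its values on the segment from `wt` to `w`, and using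
convexity of `H` there, gives after dividing by the step length `t` and letting `t → 0⁺` the
optimality condition `⟪v - wt, w - wt⟫ / η ≤ H w - H wt` for `v = wprev - η (G' + δ)`. The
three-point identity rewrites `⟪wprev - wt, wt - w⟫` as the combination of squared distances,
and Young's inequality absorbs the error term `⟪δ, wt - w⟫`.
-/

open RealInnerProductSpace Set Filter Topology

theorem nonneg_of_forall_nonneg_add_mul {a b : ℝ} (h : ∀ t, 0 < t → t ≤ 1 → 0 ≤ a + t * b) :
    0 ≤ a := by
  have hlim : Tendsto (fun t => a + t * b) (𝓝[>] 0) (𝓝 a) :=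
    ((by fun_prop : Continuous fun t : ℝ => a + t * b).tendsto' 0 a (by simp)).mono_left
      nhdsWithin_le_nhds
  refine ge_of_tendsto hlim ?_
  filter_upwards [Ioc_mem_nhdsGT one_pos] with t ht using h t ht.1 ht.2

section InnerProductSpace

variable {E : Type*} [NormedAddCommGroup E] [InnerProductSpace ℝ E]

theorem norm_add_smul_sub_sq (x d v : E) (t : ℝ) :
    ‖x + t • d - v‖ ^ 2 = ‖x - v‖ ^ 2 - 2 * t * ⟪v - x, d⟫ + t ^ 2 * ‖d‖ ^ 2 := by
  rw [show x + t • d - v = t • d - (v - x) by abel, norm_sub_sq_real, norm_smul,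
    real_inner_smul_left, mul_pow, Real.norm_eq_abs, sq_abs, norm_sub_rev, real_inner_comm]
  ring

theorem ConvexOn.two_mul_inner_le_of_isMinOn_add_sq_norm {s : Set E} {H : E → ℝ}
    (hH : ConvexOn ℝ s H) {c : ℝ} {v x w : E} (hx : x ∈ s) (hw : w ∈ s)
    (hmin : IsMinOn (fun u => H u + c * ‖u - v‖ ^ 2) s x) :
    2 * c * ⟪v - x, w - x⟫ ≤ H w - H x := by
  refine sub_nonneg.1 (nonneg_of_forall_nonneg_add_mul (b := c * ‖w - x‖ ^ 2) fun t ht ht1 => ?_)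
  have hseg : (1 - t) • x + t • w = x + t • (w - x) := by module
  have hconv : H (x + t • (w - x)) ≤ (1 - t) * H x + t * H w :=
    hseg ▸ hH.2 hx hw (by linarith) ht.le (by ring)
  have hle : H x + c * ‖x - v‖ ^ 2 ≤ H (x + t • (w - x)) + c * ‖x + t • (w - x) - v‖ ^ 2 :=
    hmin (hseg ▸ hH.1 hx hw (by linarith) ht.le (by ring))
  rw [norm_add_smul_sub_sq] at hle
  refine nonneg_of_mul_nonneg_right ?_ ht
  linarith

theorem real_inner_le_half_norm_sq_add_half_norm_sq (x y : E) :
    ⟪x, y⟫ ≤ 1 / 2 * ‖x‖ ^ 2 + 1 / 2 * ‖y‖ ^ 2 := by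
  nlinarith [norm_sub_sq_real x y, sq_nonneg ‖x - y‖]

theorem two_mul_real_inner_sub_sub_eq (x y w : E) :
    2 * ⟪y - x, x - w⟫ = ‖y - w‖ ^ 2 - ‖x - w‖ ^ 2 - ‖x - y‖ ^ 2 := by
  rw [show y - w = (y - x) + (x - w) by abel, norm_add_sq_real, norm_sub_rev x y]
  ring

theorem ConvexOn.inner_sub_le_of_isMinOn_prox {s : Set E} {H : E → ℝ} (hH : ConvexOn ℝ s H)
    {η : ℝ} (hη : η ≠ 0) {g y x w : E} (hx : x ∈ s) (hw : w ∈ s)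
    (hmin : IsMinOn (fun u => H u + 1 / (2 * η) * ‖u - (y - η • g)‖ ^ 2) s x) :
    ⟪g, x - w⟫ ≤ H w - H x + ⟪y - x, x - w⟫ / η := by
  have hopt := hH.two_mul_inner_le_of_isMinOn_add_sq_norm hx hw hmin
  have hsplit : ⟪y - η • g - x, w - x⟫ = η * ⟪g, x - w⟫ - ⟪y - x, x - w⟫ := by
    rw [show y - η • g - x = (y - x) - η • g by abel, inner_sub_left, real_inner_smul_left,
      ← neg_sub x w, inner_neg_right, inner_neg_right]
    ring
  have hcancel : 2 * (1 / (2 * η)) * (η * ⟪g, x - w⟫ - ⟪y - x, x - w⟫)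
      = ⟪g, x - w⟫ - ⟪y - x, x - w⟫ / η := by
    field_simp
  linarith [hsplit ▸ hopt]

end InnerProductSpace

theorem stmt_11_general {E : Type*} [NormedAddCommGroup E] [InnerProductSpace ℝ E]
    (H : E → ℝ) (hH : ConvexOn ℝ Set.univ H)
    (G' δ wprev : E) (η : ℝ) (hη : 0 < η)
    (wt : E)
    (hwt : IsMinOn
      (fun u : E => H u + 1 / (2 * η) * ‖u - (wprev - η • (G' + δ))‖ ^ 2) Set.univ wt) :
    ∀ w : E, ⟪G', wt - w⟫ ≤
      H w - H wt
        + 1 / (2 * η) * (‖wprev - w‖ ^ 2 - ‖wt - w‖ ^ 2 - ‖wt - wprev‖ ^ 2)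
        + 1 / 2 * ‖δ‖ ^ 2 + 1 / 2 * ‖wt - w‖ ^ 2 := by
  intro w
  have hstep := hH.inner_sub_le_of_isMinOn_prox hη.ne' (mem_univ wt) (mem_univ w) hwt
  rw [inner_add_left] at hstep
  have hyoung := real_inner_le_half_norm_sq_add_half_norm_sq (-δ) (wt - w)
  rw [inner_neg_left, norm_neg] at hyoung
  have hthree : ⟪wprev - wt, wt - w⟫ / η
      = 1 / (2 * η) * (‖wprev - w‖ ^ 2 - ‖wt - w‖ ^ 2 - ‖wt - wprev‖ ^ 2) := by
    rw [← two_mul_real_inner_sub_sub_eq]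
    field_simp
  linarith

/-- Bound on the proximal step (first half of Lemma on proximal updates): with `g = G′ + δ`,
`η > 0`, and `w_t = prox_{ηH}(w_{t−1} − ηg)` for convex `H`, every `w` satisfies
`⟪G′, w_t − w⟫ ≤ H(w) − H(w_t) + (1/(2η))(‖w_{t−1} − w‖² − ‖w_t − w‖² − ‖w_t − w_{t−1}‖²)
  + (1/2)‖δ‖² + (1/2)‖w_t − w‖²`. -/
theorem stmt_11 {E : Type*} [NormedAddCommGroup E] [InnerProductSpace ℝ E]
    [FiniteDimensional ℝ E]
    (H : E → ℝ) (hH : ConvexOn ℝ Set.univ H)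
    (G' δ wprev : E) (η : ℝ) (hη : 0 < η)
    (wt : E)
    (hwt : IsMinOn
      (fun u : E => H u + 1 / (2 * η) * ‖u - (wprev - η • (G' + δ))‖ ^ 2) Set.univ wt) :
    ∀ w : E, ⟪G', wt - w⟫ ≤
      H w - H wt
        + 1 / (2 * η) * (‖wprev - w‖ ^ 2 - ‖wt - w‖ ^ 2 - ‖wt - wprev‖ ^ 2)
        + 1 / 2 * ‖δ‖ ^ 2 + 1 / 2 * ‖wt - w‖ ^ 2 :=
  stmt_11_general H hH G' δ wprev η hη wt hwt
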